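/- arXiv:2110.07289 — 6 statements merged into one kernel-verified Lean document; each statement's English description precedes it below -/
import Mathlib

section
/- Let (Y,λ) be a σ-finite measure space and let T be a measure-preserving bijection of Y (modulo null sets). If λ(supp T) > R, then there exist pairwise disjoint finite-measure sets A₁,…,Aₙ with λ(A₁ ∪ ⋯ ∪ Aₙ) > R, each Aᵢ contained in supp T, and λ(T(Aᵢ) ∩ Aᵢ) = 0 for each i. -/
open MeasureTheory ENNReal

/-- If a measure-preserving bijection `T` of a σ-finite standard space has support of
measure `> R`, then there are finitely many pairwise disjoint finite-measure sets
`A 0, …, A (n-1)` contained in the support, whose union has measure `> R`, and such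
that each `A i` is moved off itself by `T` (up to null sets). -/
theorem stmt_2 {Y : Type*} [MeasurableSpace Y] [StandardBorelSpace Y]
    (lam : Measure Y) [SigmaFinite lam]
    (T : Y ≃ᵐ Y) (hT : MeasurePreserving T lam lam)
    (R : ℝ≥0∞) (hR : 0 < R) (hR' : R ≠ ⊤)
    (hsupp : R < lam {y | T y ≠ y}) :
    ∃ (n : ℕ) (A : Fin n → Set Y),
      (∀ i, MeasurableSet (A i)) ∧
      (∀ i, lam (A i) < ⊤) ∧
      (∀ i, A i ⊆ {y | T y ≠ y}) ∧
      Pairwise (Function.onFun Disjoint A) ∧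
      R < lam (⋃ i, A i) ∧
      (∀ i, lam (T '' A i ∩ A i) = 0) := by
  classical
  obtain ⟨f, hfm, hfsep⟩ := exists_seq_separating Y MeasurableSet.empty Set.univ
  -- basic moved sets
  set D : ℕ × Bool → Set Y := fun p =>
    if p.2 then f p.1 ∩ T ⁻¹' (f p.1)ᶜ else (f p.1)ᶜ ∩ T ⁻¹' (f p.1)
  have hDm : ∀ p, MeasurableSet (D p) := by
    rintro ⟨k, b⟩
    cases b <;>
      simp only [D, if_true, if_false, Bool.false_eq_true] <;>
      first
      | exact (hfm k).compl.inter (T.measurable (hfm k))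
      | exact (hfm k).inter (T.measurable (hfm k).compl)
  have hDsupp : ∀ p, D p ⊆ {y | T y ≠ y} := by
    rintro ⟨k, b⟩ y hy
    cases b <;> simp only [D, if_true, if_false, Bool.false_eq_true, Set.mem_inter_iff,
      Set.mem_preimage, Set.mem_compl_iff] at hy <;>
      · intro h
        rw [h] at hy
        tauto
  have hDoff : ∀ p, T '' D p ∩ D p = ∅ := by
    rintro ⟨k, b⟩
    cases b <;>
    · rw [Set.eq_empty_iff_forall_notMem]
      rintro y ⟨⟨z, hz, rfl⟩, hy⟩
      simp only [D, if_true, if_false, Bool.false_eq_true, Set.mem_inter_iff,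
        Set.mem_preimage, Set.mem_compl_iff] at hz hy
      tauto
  have hDcover : {y | T y ≠ y} ⊆ ⋃ p, D p := by
    intro y hy
    have : ¬ (∀ n, y ∈ f n ↔ T y ∈ f n) := fun h =>
      hy (hfsep y trivial (T y) trivial h).symm
    push_neg at this
    obtain ⟨k, hk⟩ := this
    rcases hk with ⟨h1, h2⟩ | ⟨h1, h2⟩
    · exact Set.mem_iUnion.2 ⟨(k, true), by simp [D, h1, h2]⟩
    · exact Set.mem_iUnion.2 ⟨(k, false), by simp [D, h1, h2]⟩
  -- intersect with spanning sets and reindex by ℕ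
  let e : ℕ ≃ ℕ × Bool × ℕ := (Denumerable.eqv (ℕ × ℕ)).symm.trans
    (Equiv.prodCongr (Equiv.refl ℕ) Equiv.boolProdNatEquivNat.symm)
  let s : ℕ → Set Y := fun n => D ((e n).1, (e n).2.1) ∩ spanningSets lam (e n).2.2
  have hsm : ∀ n, MeasurableSet (s n) := fun n =>
    (hDm _).inter (measurableSet_spanningSets lam _)
  set B : ℕ → Set Y := disjointed s with hB
  have hBm : ∀ n, MeasurableSet (B n) := MeasurableSet.disjointed hsm
  have hBsub : ∀ n, B n ⊆ s n := disjointed_subset s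
  have hBfin : ∀ n, lam (B n) < ⊤ := fun n =>
    lt_of_le_of_lt (measure_mono ((hBsub n).trans Set.inter_subset_right))
      (measure_spanningSets_lt_top lam _)
  have hBsupp : ∀ n, B n ⊆ {y | T y ≠ y} := fun n =>
    (hBsub n).trans (Set.inter_subset_left.trans (hDsupp _))
  have hBoff : ∀ n, T '' B n ∩ B n = ∅ := by
    intro n
    have h1 : B n ⊆ D ((e n).1, (e n).2.1) := (hBsub n).trans Set.inter_subset_left
    rw [Set.eq_empty_iff_forall_notMem]
    rintro y ⟨hy1, hy2⟩
    have : y ∈ T '' D ((e n).1, (e n).2.1) ∩ D ((e n).1, (e n).2.1) :=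
      ⟨Set.image_mono h1 hy1, h1 hy2⟩
    rw [hDoff] at this
    exact this
  have hBdisj : Pairwise (Function.onFun Disjoint B) := disjoint_disjointed s
  -- union has large measure
  have hUnion : {y | T y ≠ y} ⊆ ⋃ n, B n := by
    rw [hB, iUnion_disjointed]
    intro y hy
    obtain ⟨p, hp⟩ := Set.mem_iUnion.1 (hDcover hy)
    obtain ⟨m, hm⟩ := Set.mem_iUnion.1 <|
      (iUnion_spanningSets lam).symm ▸ (Set.mem_univ y)
    refine Set.mem_iUnion.2 ⟨e.symm (p.1, p.2, m), ?_⟩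
    simp only [s, Equiv.apply_symm_apply]
    exact ⟨hp, hm⟩
  have hmeas : R < lam (⋃ n, B n) := lt_of_lt_of_le hsupp (measure_mono hUnion)
  -- continuity from below: take a finite subfamily
  have hacc : lam (⋃ n, B n) = ⨆ n, lam (Set.accumulate B n) := by
    rw [← Set.iUnion_accumulate]
    exact (Set.monotone_accumulate.directed_le).measure_iUnion
  rw [hacc, lt_iSup_iff] at hmeas
  obtain ⟨N, hN⟩ := hmeas
  refine ⟨N + 1, fun i => B i, fun i => hBm i, fun i => hBfin i, fun i => hBsupp i,
    ?_, ?_, ?_⟩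
  · intro i j hij
    exact hBdisj (fun h => hij (Fin.ext h))
  · have : (⋃ i : Fin (N + 1), B i) = Set.accumulate B N := by
      ext y
      simp only [Set.mem_iUnion, Set.mem_accumulate]
      constructor
      · rintro ⟨i, hi⟩; exact ⟨i, Nat.lt_succ_iff.1 i.isLt, hi⟩
      · rintro ⟨j, hj, hy⟩; exact ⟨⟨j, Nat.lt_succ_iff.2 hj⟩, hy⟩
    rw [this]; exact hN
  · intro i
    rw [hBoff i, measure_empty]
end

section
/- Let (Y,λ) be a σ-finite measure space and R > 0. The set of measure-preserving transformations T of (Y,λ) with λ(supp T) ≤ R is closed in the weak topology on Aut(Y,λ). -/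
open MeasureTheory ENNReal Filter Set

lemma moved_eq_aux {Y : Type*} (U : ℕ → Set Y)
    (hsep : ∀ x y : Y, (∀ n, x ∈ U n ↔ y ∈ U n) → x = y) (f : Y → Y) :
    {y | f y ≠ y} = ⋃ k, ((U k \ f ⁻¹' U k) ∪ (f ⁻¹' U k \ U k)) := by
  ext y
  simp only [mem_setOf_eq, mem_iUnion, mem_union, mem_diff, mem_preimage]
  constructor
  · intro h
    by_contra hc
    push_neg at hc
    exact h (hsep _ _ fun n => by specialize hc n; tauto)
  · rintro ⟨k, hk⟩ he
    rw [he] at hk; tauto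

/-- The set of measure-preserving transformations of a σ-finite standard space whose
support has measure `≤ R` is (sequentially) closed in the weak topology: if
`λ(supp Tₙ) ≤ R` for all `n` and `Tₙ → S` weakly (i.e. `λ(Tₙ(A) △ S(A)) → 0` for every
finite-measure Borel set `A`), then `λ(supp S) ≤ R`. -/
theorem stmt_3 {Y : Type*} [MeasurableSpace Y] [StandardBorelSpace Y]
    (lam : Measure Y) [SigmaFinite lam]
    (R : ℝ≥0∞) (hR : 0 < R) (hR' : R ≠ ⊤)
    (T : ℕ → (Y ≃ᵐ Y)) (hT : ∀ n, MeasurePreserving (T n) lam lam)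
    (S : Y ≃ᵐ Y) (hS : MeasurePreserving S lam lam)
    (hconv : ∀ A : Set Y, MeasurableSet A → lam A < ⊤ →
      Tendsto (fun n => lam (symmDiff (T n '' A) (S '' A))) atTop (nhds 0))
    (hsupp : ∀ n, lam {y | T n y ≠ y} ≤ R) :
    lam {y | S y ≠ y} ≤ R := by
  -- a countable separating family of measurable sets
  obtain ⟨U, hUm, hUsep⟩ :=
    exists_seq_separating Y MeasurableSet.empty (univ : Set Y)
  have hsep : ∀ x y : Y, (∀ n, x ∈ U n ↔ y ∈ U n) → x = y :=
    fun x y h => hUsep x (mem_univ x) y (mem_univ y) h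
  set D := {y | S y ≠ y} with hD
  have hDeq := moved_eq_aux U hsep S
  have hDmeas : MeasurableSet D := by
    rw [hD, hDeq]
    exact MeasurableSet.iUnion fun k =>
      ((hUm k).diff ((hUm k).preimage S.measurable)).union
        (((hUm k).preimage S.measurable).diff (hUm k))
  -- the "halves" of the symmetric differences, reindexed over ℕ
  set V : ℕ ⊕ ℕ → Set Y :=
    Sum.elim (fun k => U k \ S ⁻¹' U k) (fun k => S ⁻¹' U k \ U k) with hV
  set W : ℕ → Set Y := fun j => V (Denumerable.ofNat (ℕ ⊕ ℕ) j) with hW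
  have hVmeas : ∀ p, MeasurableSet (V p) := by
    rintro (k | k)
    · exact (hUm k).diff ((hUm k).preimage S.measurable)
    · exact ((hUm k).preimage S.measurable).diff (hUm k)
  have hWmeas : ∀ j, MeasurableSet (W j) := fun j => hVmeas _
  have hVmove : ∀ p (y : Y), y ∈ V p → S y ∉ V p := by
    rintro (k | k) y hy hSy <;>
      simp only [hV, Sum.elim_inl, Sum.elim_inr, mem_diff, mem_preimage] at hy hSy <;>
      tauto
  have hWmove : ∀ j (y : Y), y ∈ W j → S y ∉ W j := fun j => hVmove _
  have hDW : D ⊆ ⋃ j, W j := by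
    intro y hy
    rw [hD, hDeq] at hy
    simp only [mem_iUnion, mem_union] at hy ⊢
    obtain ⟨k, hk | hk⟩ := hy
    · exact ⟨Encodable.encode (Sum.inl k : ℕ ⊕ ℕ), by
        rw [hW]; simp only [Denumerable.ofNat_encode]; simpa [hV] using hk⟩
    · exact ⟨Encodable.encode (Sum.inr k : ℕ ⊕ ℕ), by
        rw [hW]; simp only [Denumerable.ofNat_encode]; simpa [hV] using hk⟩
  -- reduce to finite-measure pieces of D
  have key : ∀ m : ℕ, lam (D ∩ spanningSets lam m) ≤ R := by
    intro m
    set C := D ∩ spanningSets lam m with hC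
    have hCmeas : MeasurableSet C := hDmeas.inter (measurableSet_spanningSets lam m)
    have hCfin : lam C < ⊤ :=
      (measure_mono inter_subset_right).trans_lt (measure_spanningSets_lt_top lam m)
    -- disjointify
    set B : ℕ → Set Y := disjointed (fun j => C ∩ W j) with hB
    have hBsub : ∀ j, B j ⊆ C ∩ W j := fun j => disjointed_subset _ j
    have hBmeas : ∀ j, MeasurableSet (B j) :=
      MeasurableSet.disjointed fun j => hCmeas.inter (hWmeas j)
    have hBUnion : ⋃ j, B j = C := by
      rw [hB, iUnion_disjointed, ← inter_iUnion]
      exact inter_eq_left.2 fun y hy => hDW hy.1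
    have hBdisj : Pairwise (Function.onFun Disjoint B) := disjoint_disjointed _
    have hBsum : ∑' j, lam (B j) = lam C := by
      rw [← measure_iUnion hBdisj hBmeas, hBUnion]
    have hBmove : ∀ j (y : Y), y ∈ B j → S y ∉ B j := fun j y hy hSy =>
      hWmove j y (hBsub j hy).2 (hBsub j hSy).2
    have hBfin : ∀ j, lam (B j) < ⊤ :=
      fun j => ((measure_mono ((hBsub j).trans inter_subset_left)).trans_lt hCfin)
    -- ε-argument
    refine ENNReal.le_of_forall_pos_le_add fun ε hε _ => ?_
    have hε2 : (0 : ℝ≥0∞) < ε / 2 :=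
      ENNReal.half_pos (by exact_mod_cast hε.ne')
    -- choose tail cutoff J
    have htail : Tendsto (fun J => ∑' j, lam (B (j + J))) atTop (nhds 0) :=
      ENNReal.tendsto_sum_nat_add _ (by rw [hBsum]; exact hCfin.ne)
    obtain ⟨J, hJ⟩ := (htail.eventually (gt_mem_nhds hε2)).exists
    set δ : ℝ≥0∞ := ε / (2 * (J + 1)) with hδ
    have hδpos : 0 < δ := by
      apply ENNReal.div_pos (by exact_mod_cast hε.ne')
      exact ENNReal.mul_ne_top (by norm_num) (by simp)
    -- choose n with all J symmetric differences small
    have hev : ∀ᶠ n in atTop, ∀ j ∈ Finset.range J,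
        lam (symmDiff (T n '' B j) (S '' B j)) < δ := by
      rw [Filter.eventually_all_finset]
      exact fun j _ => (hconv (B j) (hBmeas j) (hBfin j)).eventually (gt_mem_nhds hδpos)
    obtain ⟨n, hn⟩ := hev.exists
    -- the fixed-point set of T n inside C
    set F := C ∩ {y | T n y = y} with hF
    have hFmeas : MeasurableSet F := by
      have : {y | (T n : Y → Y) y ≠ y} =
          ⋃ k, ((U k \ (T n) ⁻¹' U k) ∪ ((T n) ⁻¹' U k \ U k)) :=
        moved_eq_aux U hsep (T n)
      have hmoved : MeasurableSet {y | (T n : Y → Y) y ≠ y} := by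
        rw [this]
        exact MeasurableSet.iUnion fun k =>
          ((hUm k).diff ((hUm k).preimage (T n).measurable)).union
            (((hUm k).preimage (T n).measurable).diff (hUm k))
      have : F = C \ {y | (T n : Y → Y) y ≠ y} := by
        ext y; simp only [hF, mem_inter_iff, mem_setOf_eq, mem_diff, not_not]
      rw [this]; exact hCmeas.diff hmoved
    -- each piece of F sits in the symmetric difference
    have hpiece : ∀ j, lam (F ∩ B j) ≤ lam (symmDiff (T n '' B j) (S '' B j)) := by
      intro j
      apply measure_mono
      rintro y ⟨⟨-, hfix⟩, hyB⟩
      rw [Set.mem_symmDiff]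
      left
      refine ⟨⟨y, hyB, hfix⟩, ?_⟩
      rintro ⟨z, hz, rfl⟩
      exact hBmove j z hz hyB
    -- bound λ F
    have hFsub : F ⊆ (⋃ j ∈ Finset.range J, (F ∩ B j)) ∪ ⋃ j, B (j + J) := by
      intro y hy
      have : y ∈ ⋃ j, B j := hBUnion ▸ hy.1
      obtain ⟨j, hj⟩ := mem_iUnion.1 this
      rcases lt_or_ge j J with h | h
      · exact Or.inl (mem_iUnion₂.2 ⟨j, Finset.mem_range.2 h, hy, hj⟩)
      · exact Or.inr (mem_iUnion.2 ⟨j - J, by rwa [Nat.sub_add_cancel h]⟩)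
    have hFbound : lam F ≤ ε := by
      calc lam F ≤ lam (⋃ j ∈ Finset.range J, (F ∩ B j)) + lam (⋃ j, B (j + J)) :=
            (measure_mono hFsub).trans (measure_union_le _ _)
        _ ≤ (∑ j ∈ Finset.range J, lam (F ∩ B j)) + ∑' j, lam (B (j + J)) :=
            add_le_add (measure_biUnion_finset_le _ _) (measure_iUnion_le _)
        _ ≤ (∑ j ∈ Finset.range J, δ) + ε / 2 :=
            add_le_add (Finset.sum_le_sum fun j hj =>
              (hpiece j).trans (hn j hj).le) hJ.le
        _ ≤ ((J : ℝ≥0∞) + 1) * δ + ε / 2 := by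
            rw [Finset.sum_const, Finset.card_range, nsmul_eq_mul]
            exact add_le_add_left (mul_le_mul_left
              (le_add_of_nonneg_right zero_le_one) δ) _
        _ = ε / 2 + ε / 2 := by
            congr 1
            rw [hδ, mul_comm (2 : ℝ≥0∞), ← mul_div_assoc]
            exact ENNReal.mul_div_mul_left _ _ (by simp) (by simp)
        _ = ε := ENNReal.add_halves _
    -- conclude for C
    have hCsplit : lam C ≤ lam F + lam (C \ F) := by
      refine (measure_mono ?_).trans (measure_union_le _ _)
      intro y hy
      by_cases h : y ∈ F
      · exact Or.inl h
      · exact Or.inr ⟨hy, h⟩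
    have hCF : lam (C \ F) ≤ R := by
      refine (measure_mono ?_).trans (hsupp n)
      rintro y ⟨hyC, hyF⟩
      simp only [hF, mem_inter_iff, not_and, mem_setOf_eq] at hyF ⊢
      exact hyF hyC
    calc lam C ≤ lam F + lam (C \ F) := hCsplit
      _ ≤ ε + R := add_le_add hFbound hCF
      _ = R + ε := add_comm _ _
  -- assemble over the spanning sets
  have hDunion : D = ⋃ m, D ∩ spanningSets lam m := by
    rw [← inter_iUnion, iUnion_spanningSets, inter_univ]
  calc lam D = lam (⋃ m, D ∩ spanningSets lam m) := by rw [← hDunion]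
    _ = ⨆ m, lam (D ∩ spanningSets lam m) :=
        Directed.measure_iUnion
          ((monotone_const.inter (monotone_spanningSets lam)).directed_le)
    _ ≤ R := iSup_le key
end

section
/- Let (Y,λ) be a non-atomic measure space and let A, B be measurable subsets. Then A ⊆ B modulo null sets if and only if G_A ≤ G_B, where G_A is the group of measure-preserving finite-support transformations supported (mod null sets) in A. -/
/-!
If `λ (A \ B) > 0`, pick `S ⊆ A \ B` of finite positive measure and transport the normalised
restriction of `λ` to `S` to a non-atomic probability measure `μ` on `ℝ` by a Borel isomorphism.
Its distribution function `F` pushes `μ` to Lebesgue measure on `(0, 1)` and the quantile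
function `Q` inverts `F` almost everywhere, so `Q ∘ (1 - ·) ∘ F` is a `μ`-preserving involution
modulo null sets, whose fixed points lie in the null set `F⁻¹ {1/2}`. Corrected on a null set and
extended by the identity off `S`, it is an element of `G_A` that is not in `G_B`.
-/

open MeasureTheory ENNReal Set Filter ProbabilityTheory Function Topology

theorem Real.volume_Ioo_inter_Iic {c : ℝ} (hc : c ≤ 1) :
    volume (Ioo 0 1 ∩ Iic c) = ENNReal.ofReal c := by
  refine le_antisymm ?_ ?_
  · calc volume (Ioo 0 1 ∩ Iic c) ≤ volume (Ioc 0 c) :=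
          measure_mono fun u hu => ⟨hu.1.1, hu.2⟩
      _ = ENNReal.ofReal c := by simp
  · calc ENNReal.ofReal c = volume (Ioo 0 c) := by simp
      _ ≤ volume (Ioo 0 1 ∩ Iic c) :=
          measure_mono fun u hu => ⟨⟨hu.1, hu.2.trans_le hc⟩, hu.2.le⟩

theorem Real.measurePreserving_one_sub_Ioo :
    MeasurePreserving (fun u : ℝ => 1 - u) (volume.restrict (Ioo 0 1))
      (volume.restrict (Ioo 0 1)) := by
  simpa [preimage_const_sub_Ioo] using (volume.measurePreserving_sub_left (1 : ℝ)).restrict_preimage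
    (measurableSet_Ioo (a := 0) (b := 1))

namespace ProbabilityTheory

/-- Off `(0, 1)` the set below is empty or unbounded below, so its `sInf` would be junk. -/
noncomputable def quantile (μ : Measure ℝ) (u : ℝ) : ℝ :=
  if u ∈ Ioo 0 1 then sInf {x | u ≤ cdf μ x} else 0

variable (μ : Measure ℝ) [IsProbabilityMeasure μ]

theorem continuous_cdf [NullSingletonClass μ] : Continuous (cdf μ) := by
  refine continuous_iff_continuousAt.2 fun x => ?_
  rw [(monotone_cdf μ).continuousAt_iff_leftLim_eq_rightLim, (cdf μ).rightLim_eq]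
  have h := measure_singleton (μ := μ) x
  rw [← measure_cdf μ, (cdf μ).measure_singleton, ofReal_eq_zero] at h
  exact le_antisymm ((monotone_cdf μ).leftLim_le le_rfl) (sub_nonpos.1 h)

theorem quantile_le_iff [NullSingletonClass μ] {u x : ℝ} (hu : u ∈ Ioo 0 1) :
    quantile μ u ≤ x ↔ u ≤ cdf μ x := by
  set s := {x | u ≤ cdf μ x}
  have hne : s.Nonempty := ((tendsto_cdf_atTop μ).eventually (eventually_ge_nhds hu.2)).exists
  have hbdd : BddBelow s := by
    obtain ⟨a, ha⟩ :=
      eventually_atBot.1 ((tendsto_cdf_atBot μ).eventually (eventually_lt_nhds hu.1))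
    exact ⟨a, fun y hy => not_lt.1 fun hya => (ha y hya.le).not_ge hy⟩
  have hmem : sInf s ∈ s := (isClosed_le continuous_const (continuous_cdf μ)).csInf_mem hne hbdd
  rw [quantile, if_pos hu]
  exact ⟨fun h => hmem.trans (monotone_cdf μ h), fun h => csInf_le hbdd h⟩

theorem cdf_quantile [NullSingletonClass μ] {u : ℝ} (hu : u ∈ Ioo 0 1) :
    cdf μ (quantile μ u) = u := by
  refine le_antisymm (not_lt.1 fun hlt => ?_) ((quantile_le_iff μ hu).1 le_rfl)
  have hev : ∀ᶠ y in 𝓝[<] quantile μ u, u < cdf μ y :=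
    nhdsWithin_le_nhds (((continuous_cdf μ).tendsto _).eventually (eventually_gt_nhds hlt))
  obtain ⟨y, hy, hyu⟩ := (hev.and self_mem_nhdsWithin).exists
  exact hyu.not_ge ((quantile_le_iff μ hu).2 hy.le)

theorem measurable_quantile [NullSingletonClass μ] : Measurable (quantile μ) := by
  refine measurable_of_Iic fun x => ?_
  have : quantile μ ⁻¹' Iic x = Ioo 0 1 ∩ Iic (cdf μ x) ∪ (Ioo 0 1)ᶜ ∩ {_u | 0 ≤ x} := by
    ext u
    by_cases hu : u ∈ Ioo 0 1
    · simp [hu, quantile_le_iff μ hu]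
    · simp [hu, quantile]
  rw [this]
  exact (measurableSet_Ioo.inter measurableSet_Iic).union
    (measurableSet_Ioo.compl.inter (MeasurableSet.const _))

theorem measurePreserving_quantile [NullSingletonClass μ] :
    MeasurePreserving (quantile μ) (volume.restrict (Ioo 0 1)) μ := by
  refine ⟨measurable_quantile μ, Measure.ext_of_Iic _ _ fun x => ?_⟩
  have : Ioo 0 1 ∩ quantile μ ⁻¹' Iic x = Ioo 0 1 ∩ Iic (cdf μ x) := by
    ext u
    exact and_congr_right fun hu => quantile_le_iff μ hu
  rw [Measure.map_apply (measurable_quantile μ) measurableSet_Iic,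
    Measure.restrict_apply' measurableSet_Ioo, inter_comm, this,
    Real.volume_Ioo_inter_Iic (cdf_le_one μ x), ofReal_cdf]

theorem measurePreserving_cdf [NullSingletonClass μ] :
    MeasurePreserving (cdf μ) μ (volume.restrict (Ioo 0 1)) := by
  refine ⟨(continuous_cdf μ).measurable, ?_⟩
  have hQ := measurePreserving_quantile μ
  have hid : cdf μ ∘ quantile μ =ᵐ[volume.restrict (Ioo 0 1)] id :=
    (ae_restrict_mem measurableSet_Ioo).mono fun u hu => cdf_quantile μ hu
  have h := Measure.map_map (μ := volume.restrict (Ioo 0 1)) (continuous_cdf μ).measurable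
    hQ.measurable
  rwa [Measure.map_congr hid, Measure.map_id, hQ.map_eq] at h

theorem ae_quantile_cdf [NullSingletonClass μ] : ∀ᵐ x ∂μ, quantile μ (cdf μ x) = x := by
  have hQ := measurePreserving_quantile μ
  have hQF : Measurable fun x => quantile μ (cdf μ x) :=
    (measurable_quantile μ).comp (continuous_cdf μ).measurable
  have h : ∀ᵐ x ∂(volume.restrict (Ioo 0 1)).map (quantile μ), quantile μ (cdf μ x) = x := by
    rw [ae_map_iff hQ.measurable.aemeasurable (p := fun x => quantile μ (cdf μ x) = x)
      (measurableSet_eq_fun hQF measurable_id)]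
    exact (ae_restrict_mem measurableSet_Ioo).mono fun u hu => by rw [cdf_quantile μ hu]
  rwa [hQ.map_eq] at h

end ProbabilityTheory

section Involution

variable {α β : Type*} [MeasurableSpace α] [MeasurableSpace β]

def IsAEFreeInvolution (T : α → α) (μ : Measure α) : Prop :=
  MeasurePreserving T μ μ ∧ ∀ᵐ x ∂μ, T (T x) = x ∧ T x ≠ x

theorem exists_isAEFreeInvolution_real (μ : Measure ℝ) [IsProbabilityMeasure μ]
    [NullSingletonClass μ] : ∃ T : ℝ → ℝ, IsAEFreeInvolution T μ := by
  have hF := measurePreserving_cdf μ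
  refine ⟨fun x => quantile μ (1 - cdf μ x),
    (measurePreserving_quantile μ).comp (Real.measurePreserving_one_sub_Ioo.comp hF), ?_⟩
  have hmem : ∀ᵐ x ∂μ, cdf μ x ∈ Ioo 0 1 :=
    hF.quasiMeasurePreserving.ae (ae_restrict_mem measurableSet_Ioo)
  have hhalf : ∀ᵐ x ∂μ, cdf μ x ≠ 1 / 2 := hF.quasiMeasurePreserving.ae (Measure.ae_ne _ _)
  filter_upwards [hmem, hhalf, ae_quantile_cdf μ] with x hx hx_half hx_inv
  have hFT : cdf μ (quantile μ (1 - cdf μ x)) = 1 - cdf μ x :=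
    cdf_quantile μ ⟨by linarith [hx.2], by linarith [hx.1]⟩
  refine ⟨by simp [hFT, hx_inv], fun h => hx_half ?_⟩
  rw [h] at hFT
  linarith

theorem IsAEFreeInvolution.of_smul_measure {T : α → α} {μ : Measure α} {c : ℝ≥0∞}
    (h : IsAEFreeInvolution T (c • μ)) (hc₀ : c ≠ 0) (hc : c ≠ ∞) : IsAEFreeInvolution T μ := by
  refine ⟨?_, by simpa [ae_iff, hc₀] using h.2⟩
  simpa [smul_smul, ENNReal.inv_mul_cancel hc₀ hc] using h.1.smul_measure c⁻¹

theorem IsAEFreeInvolution.conj {T : β → β} {μ : Measure α} {ν : Measure β}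
    (h : IsAEFreeInvolution T ν) (e : α ≃ᵐ β) (he : MeasurePreserving e μ ν) :
    IsAEFreeInvolution (e.symm ∘ T ∘ e) μ := by
  refine ⟨(he.symm e).comp (h.1.comp he), ?_⟩
  filter_upwards [he.quasiMeasurePreserving.ae h.2] with x ⟨hinv, hne⟩
  exact ⟨by simp [hinv], fun hx => hne (by simpa using congrArg e hx)⟩

theorem exists_isAEFreeInvolution [StandardBorelSpace α] (μ : Measure α) [IsFiniteMeasure μ]
    [NullSingletonClass μ] (hμ : μ ≠ 0) : ∃ T : α → α, IsAEFreeInvolution T μ := by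
  have hα : ¬Countable α := fun _ => hμ (Measure.measure_univ_eq_zero.1
    ((Set.to_countable univ).measure_zero μ))
  let e : α ≃ᵐ ℝ := PolishSpace.measurableEquivOfNotCountable hα not_countable
  have hμ₀ : μ univ ≠ 0 := Measure.measure_univ_ne_zero.2 hμ
  have hc₀ : (μ univ)⁻¹ ≠ 0 := ENNReal.inv_ne_zero.2 (measure_ne_top μ univ)
  have hc : (μ univ)⁻¹ ≠ ∞ := ENNReal.inv_ne_top.2 hμ₀
  let ρ : Measure ℝ := (μ univ)⁻¹ • μ.map e
  have : IsProbabilityMeasure ρ := ⟨by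
    simp [ρ, Measure.map_apply e.measurable MeasurableSet.univ,
      ENNReal.inv_mul_cancel hμ₀ (measure_ne_top μ univ)]⟩
  have : NullSingletonClass ρ := ⟨fun y => by simp [ρ, e.map_apply, ← e.image_symm]⟩
  obtain ⟨T, hT⟩ := exists_isAEFreeInvolution_real ρ
  exact ⟨_, (hT.of_smul_measure hc₀ hc).conj e ⟨e.measurable, rfl⟩⟩

theorem exists_measurableEquiv_ae_eq_of_ae_involutive {μ : Measure α} {T : α → α}
    (hT : Measure.QuasiMeasurePreserving T μ μ) (hinv : ∀ᵐ x ∂μ, T (T x) = x) {S : Set α}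
    (hSμ : ∀ᵐ x ∂μ, x ∈ S) : ∃ e : α ≃ᵐ α, e =ᵐ[μ] T ∧ ∀ x ∉ S, e x = x := by
  classical
  obtain ⟨G, hGμ, hG, hGS⟩ := (hSμ.and hinv).exists_measurable_mem
  -- `W` is `T`-invariant, so `T` is a genuine involution of `W`.
  set W := G ∩ T ⁻¹' G
  have hW : MeasurableSet W := hG.inter (hT.measurable hG)
  have hTW : ∀ x ∈ W, T x ∈ W := fun x hx =>
    ⟨hx.2, show T (T x) ∈ G by rw [(hGS x hx.1).2]; exact hx.1⟩
  have hf : Involutive (W.piecewise T id) := fun x => by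
    by_cases hx : x ∈ W
    · simp [hx, hTW x hx, (hGS x hx.1).2]
    · simp [hx]
  have hfm : Measurable (W.piecewise T id) := hT.measurable.piecewise hW measurable_id
  refine ⟨⟨hf.toPerm, hfm, hfm⟩, ?_, fun x hx => ?_⟩
  · filter_upwards [hGμ, hT.ae hGμ] with x hx hTx
    exact piecewise_eq_of_mem W T id ⟨hx, hTx⟩
  · exact piecewise_eq_of_notMem W T id fun h => hx (hGS x h.1).1

theorem MeasureTheory.MeasurePreserving.of_restrict {μ : Measure α} {f : α → α} {s : Set α}
    (hs : MeasurableSet s) (hf : MeasurePreserving f (μ.restrict s) (μ.restrict s))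
    (hfs : ∀ x ∉ s, f x = x) : MeasurePreserving f μ μ := by
  have hc : MeasurePreserving f (μ.restrict sᶜ) (μ.restrict sᶜ) :=
    ⟨hf.measurable, by
      rw [Measure.map_congr (ae_restrict_of_forall_mem hs.compl hfs), Measure.map_id']⟩
  simpa only [Measure.restrict_add_restrict_compl hs] using hf.add_measure hc

theorem MeasurableSet.exists_measurePreserving_equiv_support [StandardBorelSpace α]
    {ν : Measure α} [NullSingletonClass ν] {S : Set α} (hS : MeasurableSet S) (h₀ : ν S ≠ 0)
    (hS_top : ν S ≠ ∞) :
    ∃ e : α ≃ᵐ α, MeasurePreserving e ν ν ∧ {x | e x ≠ x} ⊆ S ∧ ν {x | e x ≠ x} = ν S := by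
  have : IsFiniteMeasure (ν.restrict S) := isFiniteMeasure_restrict.2 hS_top
  obtain ⟨T, hT, hT_ae⟩ :=
    exists_isAEFreeInvolution (ν.restrict S) (Measure.restrict_eq_zero.not.2 h₀)
  obtain ⟨e, heT, heS⟩ := exists_measurableEquiv_ae_eq_of_ae_involutive hT.quasiMeasurePreserving
    (hT_ae.mono fun _ => And.left) (ae_restrict_mem hS)
  have hsupp : {x | e x ≠ x} ⊆ S := fun x hx => by_contra fun h => hx (heS x h)
  have he : MeasurePreserving e (ν.restrict S) (ν.restrict S) :=
    ⟨e.measurable, by rw [Measure.map_congr heT, hT.map_eq]⟩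
  have hfull : ∀ᵐ x ∂ν.restrict S, e x ≠ x := by
    filter_upwards [heT, hT_ae] with x hx hTx
    exact hx ▸ hTx.2
  refine ⟨e, he.of_restrict hS heS, hsupp, le_antisymm (measure_mono hsupp) ?_⟩
  calc ν S = ν.restrict S univ := (Measure.restrict_apply_univ S).symm
    _ = ν.restrict S {x | e x ≠ x} := (measure_congr (ae_eq_univ.2 (ae_iff.1 hfull))).symm
    _ ≤ ν {x | e x ≠ x} := Measure.restrict_le_self _

end Involution

/-- For a non-atomic σ-finite standard space, `A ⊆ B` modulo null sets if and only if
`G_A ≤ G_B`, where `G_A` is the set of finite-measure-support measure-preserving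
transformations supported (mod null) in `A`. -/
theorem stmt_6 {Y : Type*} [MeasurableSpace Y] [StandardBorelSpace Y]
    (lam : Measure Y) [SigmaFinite lam] [NullSingletonClass lam]
    (A B : Set Y) (hA : MeasurableSet A) (hB : MeasurableSet B) :
    lam (A \ B) = 0 ↔
      ∀ T : Y ≃ᵐ Y, MeasurePreserving T lam lam → lam {y | T y ≠ y} < ⊤ →
        lam ({y | T y ≠ y} \ A) = 0 → lam ({y | T y ≠ y} \ B) = 0 := by
  refine ⟨fun hAB T _ _ hTA => measure_mono_null ?_ (measure_union_null hTA hAB), fun h => ?_⟩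
  · intro y ⟨hyT, hyB⟩
    by_cases hyA : y ∈ A
    · exact Or.inr ⟨hyA, hyB⟩
    · exact Or.inl ⟨hyT, hyA⟩
  by_contra hAB
  obtain ⟨S, hS, hSAB, hS₀, hS_top⟩ :=
    Measure.exists_subset_measure_lt_top (hA.diff hB) (pos_iff_ne_zero.2 hAB)
  obtain ⟨e, he, hsupp, he_supp⟩ := hS.exists_measurePreserving_equiv_support hS₀.ne' hS_top.ne
  have hsuppAB : {y | e y ≠ y} ⊆ A \ B := hsupp.trans hSAB
  have hD_null := h e he (he_supp ▸ hS_top)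
    (measure_mono_null (fun y hy => hy.2 (hsuppAB hy.1).1) measure_empty)
  have hD : lam {y | e y ≠ y} = 0 :=
    measure_mono_null (t := {y | e y ≠ y} \ B) (fun y hy => ⟨hy, (hsuppAB hy).2⟩) hD_null
  exact hS₀.ne' (he_supp ▸ hD)
end

section
/- If a group homomorphism between Polish groups is Baire-measurable, then it is continuous. -/
/-!
Pettis' lemma: if `A` is a non-meagre Baire-measurable subset of a Baire topological group, then
`A` agrees with a nonempty open set `U` off a meagre set, and for `g ∈ U⁻¹ * U` the nonempty open set
`U ∩ U g⁻¹` agrees residually with `A ∩ A g⁻¹`, which is therefore nonempty; hence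
`U⁻¹ * U ⊆ A⁻¹ * A` and `A⁻¹ * A` is a neighbourhood of `1`.

For a homomorphism `f : G →* H` and an open `W ∋ 1` with `W⁻¹ * W ⊆ V`, separability of `H` covers
`G` by countably many preimages `f ⁻¹' (d • W)`. One of them is non-meagre, and `f` maps
`(f ⁻¹' (d • W))⁻¹ * f ⁻¹' (d • W)`, a neighbourhood of `1`, into `W⁻¹ * W ⊆ V`.
-/

open Topology Set Filter Pointwise TopologicalSpace

theorem Filter.EventuallyEq.isMeagre_iff {X : Type*} [TopologicalSpace X] {s t : Set X}
    (h : s =ᶠ[residual X] t) : IsMeagre s ↔ IsMeagre t :=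
  congr_sets h.compl.mem_iff

section TopologicalGroup

variable {G : Type*} [Group G] [TopologicalSpace G] [IsTopologicalGroup G]

theorem exists_open_nhds_one_inv_mul_subset {V : Set G} (hV : V ∈ 𝓝 1) :
    ∃ W : Set G, IsOpen W ∧ (1 : G) ∈ W ∧ W⁻¹ * W ⊆ V := by
  obtain ⟨U, hUo, hU1, hUV⟩ := exists_open_nhds_one_mul_subset hV
  refine ⟨U ∩ U⁻¹, hUo.inter hUo.inv, ⟨hU1, by simpa using hU1⟩, ?_⟩
  calc (U ∩ U⁻¹)⁻¹ * (U ∩ U⁻¹) ⊆ U * U := by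
        rw [inter_inv, inv_inv]
        exact mul_subset_mul inter_subset_right inter_subset_left
    _ ⊆ V := hUV

theorem Dense.biUnion_smul_eq_univ {D W : Set G} (hD : Dense D) (hW : IsOpen W)
    (hne : W.Nonempty) : ⋃ d ∈ D, d • W = univ := by
  refine eq_univ_of_forall fun x => ?_
  obtain ⟨w, hw⟩ := hne
  have hopen : IsOpen {d : G | d⁻¹ * x ∈ W} := hW.preimage (by fun_prop)
  obtain ⟨d, hdW, hdD⟩ := hD.inter_open_nonempty _ hopen ⟨x * w⁻¹, by simpa using hw⟩
  exact mem_biUnion hdD (mem_smul_set_iff_inv_smul_mem.mpr hdW)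

theorem BaireMeasurableSet.inv_mul_mem_nhds_one [BaireSpace G] {A : Set G}
    (hA : BaireMeasurableSet A) (hA' : ¬IsMeagre A) : A⁻¹ * A ∈ 𝓝 1 := by
  obtain ⟨U, hUo, hAU⟩ := hA.residualEq_isOpen
  obtain ⟨u, hu⟩ : U.Nonempty := nonempty_of_not_isMeagre (hAU.isMeagre_iff.not.mp hA')
  refine mem_of_superset ((hUo.inv.mul_right).mem_nhds ⟨u⁻¹, by simpa using hu, u, hu,
    inv_mul_cancel u⟩) ?_
  rintro _ ⟨v, hv, w, hw, rfl⟩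
  have hshift : (· * (v * w)) ⁻¹' A =ᶠ[residual G] (· * (v * w)) ⁻¹' U :=
    hAU.comp_tendsto <| tendsto_residual_of_isOpenMap (continuous_mul_const _)
      (isOpenMap_mul_right _)
  have hUU : ¬IsMeagre (U ∩ (· * (v * w)) ⁻¹' U) :=
    not_isMeagre_of_isOpen (hUo.inter (hUo.preimage (continuous_mul_const _)))
      ⟨v⁻¹, hv, by simpa using hw⟩
  obtain ⟨x, hxA, hxgA⟩ := nonempty_of_not_isMeagre ((hAU.inter hshift).isMeagre_iff.not.mpr hUU)
  exact ⟨x⁻¹, inv_mem_inv.mpr hxA, x * (v * w), hxgA, by group⟩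

end TopologicalGroup

theorem MonoidHom.continuous_of_baireMeasurableSet_preimage {G H : Type*} [Group G]
    [TopologicalSpace G] [IsTopologicalGroup G] [BaireSpace G] [Group H] [TopologicalSpace H]
    [IsTopologicalGroup H] [SeparableSpace H] (f : G →* H)
    (hf : ∀ U : Set H, IsOpen U → BaireMeasurableSet (f ⁻¹' U)) : Continuous f := by
  refine continuous_of_continuousAt_one f fun V hV => ?_
  rw [map_one] at hV
  rw [mem_map]
  obtain ⟨W, hWo, hW1, hWV⟩ := exists_open_nhds_one_inv_mul_subset hV
  obtain ⟨D, hDc, hDd⟩ := exists_countable_dense H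
  have hcover : ⋃ d ∈ D, f ⁻¹' (d • W) = univ := by
    rw [← preimage_iUnion₂, hDd.biUnion_smul_eq_univ hWo ⟨1, hW1⟩, preimage_univ]
  obtain ⟨d, -, hd⟩ := exists_of_not_isMeagre_biUnion hDc
    (hcover ▸ not_isMeagre_of_isOpen isOpen_univ univ_nonempty)
  refine mem_of_superset ((hf _ (hWo.smul d)).inv_mul_mem_nhds_one hd) ?_
  rintro _ ⟨a, ha, b, hb, rfl⟩
  have h₁ := mem_smul_set_iff_inv_smul_mem.mp ha
  have h₂ := mem_smul_set_iff_inv_smul_mem.mp hb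
  show f (a * b) ∈ V
  convert hWV (mul_mem_mul (inv_mem_inv.mpr h₁) h₂) using 1
  simp only [smul_eq_mul, map_mul, map_inv]
  group

/-- Pettis: a Baire-measurable group homomorphism between Polish groups is
continuous. -/
theorem stmt_12 {G H : Type*} [Group G] [TopologicalSpace G] [IsTopologicalGroup G]
    [PolishSpace G] [Group H] [TopologicalSpace H] [IsTopologicalGroup H]
    [PolishSpace H] (f : G →* H)
    (hf : ∀ U : Set H, IsOpen U → BaireMeasurableSet (f ⁻¹' U)) :
    Continuous f :=
  f.continuous_of_baireMeasurableSet_preimage hf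
end

section
/- A finite product of topological groups, each having the automatic continuity property, has the automatic continuity property. -/
/-! A homomorphism out of a finite product `∏ Gᵢ` is the product of its restrictions to the
factors, `f x = ∏ᵢ f (mulSingle i (x i))`, where the factors commute pairwise. Each restriction
is continuous by automatic continuity of `Gᵢ`, hence so is `f`. -/

/-- A topological group has the automatic continuity property if every group
homomorphism to a separable topological group is continuous. -/
def HasAutomaticContinuity (G : Type) [Group G] [TopologicalSpace G] : Prop :=
  ∀ (H : Type) [Group H] [TopologicalSpace H] [IsTopologicalGroup H]
    [TopologicalSpace.SeparableSpace H] (f : G →* H), Continuous f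

theorem continuous_finset_noncommProd {X ι M : Type*} [TopologicalSpace X] [Monoid M]
    [TopologicalSpace M] [ContinuousMul M] (s : Finset ι) (g : ι → X → M)
    (comm : ∀ x, (s : Set ι).Pairwise fun i j => Commute (g i x) (g j x))
    (hg : ∀ i ∈ s, Continuous (g i)) :
    Continuous fun x => s.noncommProd (fun i => g i x) (comm x) := by
  induction s using Finset.cons_induction with
  | empty => simpa using continuous_const
  | cons a s _ ih =>
    simp only [Finset.noncommProd_cons]
    exact (hg a (Finset.mem_cons_self a s)).mul
      (ih (fun x => (comm x).mono fun i hi => Finset.mem_cons_of_mem hi)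
        fun i hi => hg i (Finset.mem_cons_of_mem hi))

theorem MonoidHom.continuous_of_continuous_comp_mulSingle {ι N : Type*} [Finite ι]
    [DecidableEq ι] {M : ι → Type*} [∀ i, Monoid (M i)] [∀ i, TopologicalSpace (M i)] [Monoid N]
    [TopologicalSpace N] [ContinuousMul N] (f : (∀ i, M i) →* N)
    (hf : ∀ i, Continuous (f.comp (MonoidHom.mulSingle M i))) : Continuous f := by
  cases nonempty_fintype ι
  have comm : ∀ x : ∀ i, M i, ((Finset.univ : Finset ι) : Set ι).Pairwise
      fun i j => Commute (f (Pi.mulSingle i (x i))) (f (Pi.mulSingle j (x j))) :=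
    fun x i _ j _ _ => (Pi.mulSingle_apply_commute x i j).map f
  have decomp : ⇑f = fun x =>
      Finset.univ.noncommProd (fun i => f (Pi.mulSingle i (x i))) (comm x) := by
    funext x
    conv_lhs => rw [← Finset.noncommProd_mulSingle x]
    exact Finset.univ.map_noncommProd _ _ f
  rw [decomp]
  exact continuous_finset_noncommProd _ _ comm fun i _ => (hf i).comp (continuous_apply i)

theorem stmt_15_general {ι : Type} [Finite ι] (G : ι → Type)
    [∀ i, Group (G i)] [∀ i, TopologicalSpace (G i)]
    (h : ∀ i, HasAutomaticContinuity (G i)) :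
    HasAutomaticContinuity (∀ i, G i) := by
  intro H _ _ _ _ f
  classical
  exact f.continuous_of_continuous_comp_mulSingle fun i => h i H (f.comp (MonoidHom.mulSingle G i))

/-- A finite product of topological groups, each with the automatic continuity
property, has the automatic continuity property. -/
theorem stmt_15 {ι : Type} [Finite ι] (G : ι → Type)
    [∀ i, Group (G i)] [∀ i, TopologicalSpace (G i)] [∀ i, IsTopologicalGroup (G i)]
    (h : ∀ i, HasAutomaticContinuity (G i)) :
    HasAutomaticContinuity (∀ i, G i) :=
  stmt_15_general G h
end

section
/- Let (X,μ) be a standard probability space, A a Borel set with μ(A) < 1 − 2^{-k}, and B ⊇ A with μ(B∖A) = 2^{-k}. Then {T ∈ Aut*(X,μ) : μ(T(A)∖A) ≤ 2^{-k}} = H_{X∖A} · G(A,B), where H_{X∖A} is the group of measure-preserving transformations supported in X∖A and G(A,B) = {T ∈ Aut*(X,μ) : T(A) ⊆ B mod null}. -/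
/-!
If `μ (T A \ A) ≤ μ (B \ A)`, the part `T A \ B` of `T A` that leaves `B` has measure at most
that of the part of `B \ A` not covered by `T A`. A measure-preserving involution `W`, fixing `A`,
that exchanges `T A \ B` with a subset of equal measure of the latter gives `T = W ∘ (W ∘ T)` with
`(W ∘ T) A ⊆ B` mod null sets. Conversely, if `T = U ∘ V` a.e. with `U` fixing `A` a.e. and
`V A ⊆ B` a.e., then up to null sets `T A \ A ⊆ U (B \ A)`, a set of measure `μ (B \ A)`.

The involution comes from the isomorphism mod 0 of atomless standard measure spaces of equal
mass: a Borel embedding of `X` into `ℝ` followed by the distribution function of the image measure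
carries `μ` restricted to `P` to Lebesgue measure on `(0, μ P]`, injectively off a null set.
-/

open MeasureTheory ENNReal Set Filter Topology Function

noncomputable def distribFun (ν : Measure ℝ) (x : ℝ) : ℝ := ν.real (Iic x)

section DistribFun

variable {ν : Measure ℝ}

lemma distribFun_nonneg (x : ℝ) : 0 ≤ distribFun ν x := measureReal_nonneg

variable [IsFiniteMeasure ν]

lemma monotone_distribFun : Monotone (distribFun ν) :=
  fun _ _ h => measureReal_mono (Iic_subset_Iic.2 h)

lemma distribFun_le_real_univ (x : ℝ) : distribFun ν x ≤ ν.real univ :=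
  measureReal_mono (subset_univ _)

lemma tendsto_distribFun_atBot : Tendsto (distribFun ν) atBot (𝓝 0) := by
  have hI : ⋂ x : ℝ, Iic x = ∅ := iInter_Iic_eq_empty_iff.2 (by simp)
  have := tendsto_measure_iInter_atBot (μ := ν) (fun _ => measurableSet_Iic.nullMeasurableSet)
    monotone_Iic ⟨0, measure_ne_top ν _⟩
  rw [hI, measure_empty] at this
  exact (ENNReal.tendsto_toReal zero_ne_top).comp this

lemma tendsto_distribFun_atTop : Tendsto (distribFun ν) atTop (𝓝 (ν.real univ)) :=
  (ENNReal.tendsto_toReal (measure_ne_top ν univ)).comp (tendsto_measure_Iic_atTop ν)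

lemma distribFun_sub_distribFun {x y : ℝ} (h : x ≤ y) :
    distribFun ν y - distribFun ν x = ν.real (Ioc x y) := by
  rw [distribFun, distribFun, ← measureReal_sdiff (Iic_subset_Iic.2 h) measurableSet_Iic,
    Iic_sdiff_Iic]

lemma continuous_distribFun [NullSingletonClass ν] : Continuous (distribFun ν) := by
  refine continuous_iff_continuousAt.2 fun b => ?_
  have hIcc : Tendsto (fun y => ν.real (Icc (b - |y - b|) (b + |y - b|))) (𝓝 b) (𝓝 0) := by
    have hδ : Tendsto (fun y => |y - b|) (𝓝 b) (𝓝 0) := by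
      simpa using (continuous_sub_right b).abs.tendsto b
    exact ((ENNReal.tendsto_toReal zero_ne_top).comp (tendsto_measure_Icc ν b)).comp hδ
  refine tendsto_iff_dist_tendsto_zero.2 (squeeze_zero (fun _ => dist_nonneg) (fun y => ?_) hIcc)
  have hIoc : ∀ {u v}, b - |y - b| ≤ u → v ≤ b + |y - b| → ν.real (Ioc u v) ≤
      ν.real (Icc (b - |y - b|) (b + |y - b|)) := fun hu hv =>
    measureReal_mono (Ioc_subset_Icc_self.trans (Icc_subset_Icc hu hv))
  rw [Real.dist_eq]
  rcases le_total y b with h | h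
  · rw [abs_sub_comm, abs_of_nonneg (sub_nonneg.2 (monotone_distribFun h)),
      distribFun_sub_distribFun h]
    exact hIoc (by rw [abs_of_nonpos (by linarith)]; linarith) (by linarith [abs_nonneg (y - b)])
  · rw [abs_of_nonneg (sub_nonneg.2 (monotone_distribFun h)), distribFun_sub_distribFun h]
    exact hIoc (by linarith [abs_nonneg (y - b)]) (by rw [abs_of_nonneg (by linarith)]; linarith)

lemma measure_distribFun_preimage_Iic [NullSingletonClass ν] {t : ℝ} (ht : 0 ≤ t)
    (htm : t < ν.real univ) : ν (distribFun ν ⁻¹' Iic t) = ENNReal.ofReal t := by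
  set S := distribFun ν ⁻¹' Iic t
  rcases S.eq_empty_or_nonempty with hS | hS
  · obtain rfl : t = 0 := by
      refine le_antisymm (le_of_not_gt fun ht0 => ?_) ht
      obtain ⟨x, hx⟩ := ((tendsto_distribFun_atBot (ν := ν)).eventually (gt_mem_nhds ht0)).exists
      exact hS.subset hx.le
    rw [hS, measure_empty, ofReal_zero]
  have hbdd : BddAbove S := by
    obtain ⟨a, ha⟩ := eventually_atTop.1 (tendsto_distribFun_atTop.eventually (lt_mem_nhds htm))
    exact ⟨a, fun x hx => le_of_not_gt fun hax => (ha x hax.le).not_ge hx⟩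
  set c := sSup S
  have hc : c ∈ S := (isClosed_Iic.preimage continuous_distribFun).csSup_mem hS hbdd
  have hSc : S = Iic c :=
    Subset.antisymm (fun x hx => le_csSup hbdd hx) fun x hx => (monotone_distribFun hx).trans hc
  -- points to the right of `c` lie outside `S`, so continuity forces `distribFun ν c ≥ t`
  have hFc : distribFun ν c = t := by
    refine le_antisymm hc (ge_of_tendsto (continuous_distribFun.tendsto c |>.mono_left
      nhdsWithin_le_nhds) (eventually_nhdsWithin_of_forall (s := Ioi c) fun y hy => ?_))
    exact le_of_lt (lt_of_not_ge fun hyt => hy.not_ge (le_csSup hbdd hyt))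
  rw [hSc, ← hFc, distribFun, ofReal_measureReal]

lemma map_distribFun [NullSingletonClass ν] :
    ν.map (distribFun ν) = volume.restrict (Ioc 0 (ν.real univ)) := by
  refine Measure.ext_of_Iic _ _ fun t => ?_
  have hIoc : Iic t ∩ Ioc 0 (ν.real univ) = Ioc 0 (min t (ν.real univ)) := by
    ext x; simp only [mem_inter_iff, mem_Iic, mem_Ioc, le_min_iff]; tauto
  rw [Measure.map_apply monotone_distribFun.measurable measurableSet_Iic,
    Measure.restrict_apply measurableSet_Iic, hIoc, Real.volume_Ioc, sub_zero]
  rcases lt_or_ge t 0 with ht | ht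
  · have : distribFun ν ⁻¹' Iic t = ∅ :=
      eq_empty_of_forall_notMem fun x hx => (ht.trans_le (distribFun_nonneg x)).not_ge hx
    rw [this, measure_empty, ofReal_eq_zero.2 ((min_le_left _ _).trans ht.le)]
  rcases lt_or_ge t (ν.real univ) with htm | htm
  · rw [min_eq_left htm.le, measure_distribFun_preimage_Iic ht htm]
  · have : distribFun ν ⁻¹' Iic t = univ :=
      eq_univ_of_forall fun x => (distribFun_le_real_univ x).trans htm
    rw [this, min_eq_right htm, ofReal_measureReal]

end DistribFun

lemma Monotone.strictMonoOn_compl_preimage_range_rat {α : Type*} [PartialOrder α] {f : ℝ → α}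
    (hf : Monotone f) : StrictMonoOn f (f ⁻¹' range fun q : ℚ => f q)ᶜ := by
  intro x hx y _ hxy
  obtain ⟨q, hxq, hqy⟩ := exists_rat_btwn hxy
  refine (hf hxy.le).lt_of_ne fun hfxy => hx ⟨q, le_antisymm ?_ (hf hxq.le)⟩
  exact (hf hqy.le).trans hfxy.ge

lemma MeasurableEmbedding.nullSingletonClass_map {X Y : Type*} [MeasurableSpace X]
    [MeasurableSpace Y] {f : X → Y} (hf : MeasurableEmbedding f) (μ : Measure X)
    [NullSingletonClass μ] : NullSingletonClass (μ.map f) :=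
  ⟨fun y => by
    rw [hf.map_apply]
    exact (subsingleton_singleton.preimage hf.injective).measure_zero μ⟩

section StandardBorel

variable {X : Type*} [MeasurableSpace X] [StandardBorelSpace X] {μ : Measure X}
  [IsFiniteMeasure μ] [NullSingletonClass μ]

theorem exists_injOn_map_restrict_eq_volume {P : Set X} (hP : MeasurableSet P) :
    ∃ φ : X → ℝ, Measurable φ ∧ ∃ P' ⊆ P, MeasurableSet P' ∧ μ (P \ P') = 0 ∧ InjOn φ P' ∧
      (μ.restrict P').map φ = volume.restrict (Ioc 0 (μ.real P)) := by
  have hj := measurableEmbedding_embeddingReal X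
  set ν := (μ.restrict P).map (embeddingReal X)
  have := hj.nullSingletonClass_map (μ.restrict P)
  set F := distribFun ν
  have hF : Measurable F := monotone_distribFun.measurable
  set C := range fun q : ℚ => F q
  set N := embeddingReal X ⁻¹' (F ⁻¹' C)
  have hNm : MeasurableSet N := hj.measurable (hF (countable_range _).measurableSet)
  have hPN : μ (P \ (P \ N)) = 0 := by
    rw [sdiff_sdiff_right_self, inter_comm,
      ← Measure.restrict_apply hNm, ← hj.map_apply, ← Measure.map_apply hF
        (countable_range _).measurableSet, map_distribFun]
    exact (countable_range _).measure_zero _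
  have hν : ν.real univ = μ.real P := by
    rw [measureReal_def, measureReal_def, hj.map_apply, preimage_univ, Measure.restrict_apply_univ]
  refine ⟨F ∘ embeddingReal X, hF.comp hj.measurable, P \ N, sdiff_subset, hP.diff hNm, hPN,
    monotone_distribFun.strictMonoOn_compl_preimage_range_rat.injOn.comp hj.injective.injOn
      fun x hx => hx.2, ?_⟩
  rw [Measure.restrict_congr_set (ae_eq_set.2 ⟨by rw [sdiff_eq_empty.2 sdiff_subset, measure_empty],
    hPN⟩), ← Measure.map_map hF hj.measurable, map_distribFun, hν]

theorem exists_subset_measure_eq {s : Set X} (hs : MeasurableSet s) {r : ℝ≥0∞} (hr : r ≤ μ s) :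
    ∃ t ⊆ s, MeasurableSet t ∧ μ t = r := by
  obtain ⟨φ, hφ, s', hs's, hs', -, -, hmap⟩ := exists_injOn_map_restrict_eq_volume (μ := μ) hs
  have hr' : r.toReal ≤ μ.real s := ENNReal.toReal_mono (measure_ne_top μ s) hr
  refine ⟨s' ∩ φ ⁻¹' Ioc 0 r.toReal, inter_subset_left.trans hs's,
    hs'.inter (hφ measurableSet_Ioc), ?_⟩
  rw [inter_comm, ← Measure.restrict_apply (hφ measurableSet_Ioc),
    ← Measure.map_apply hφ measurableSet_Ioc, hmap, Measure.restrict_apply measurableSet_Ioc,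
    inter_eq_left.2 (Ioc_subset_Ioc_right hr'), Real.volume_Ioc, sub_zero,
    ofReal_toReal (ne_top_of_le_ne_top (measure_ne_top μ s) hr)]

end StandardBorel

lemma exists_measurable_leftInvOn {X Y : Type*} [MeasurableSpace X] [StandardBorelSpace X]
    [Nonempty X] [MeasurableSpace Y] [MeasurableSpace.CountablySeparated Y] {φ : X → Y}
    {P : Set X} (hφ : Measurable φ) (hP : MeasurableSet P) (hinj : InjOn φ P) :
    ∃ g : Y → X, Measurable g ∧ LeftInvOn g φ P := by
  have := hP.standardBorel
  have he : MeasurableEmbedding fun x : P => φ x :=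
    (hφ.comp measurable_subtype_coe).measurableEmbedding (injOn_iff_injective.1 hinj)
  obtain ⟨g, hg, hgφ⟩ := he.exists_measurable_extend measurable_subtype_coe fun _ => ‹_›
  exact ⟨g, hg, fun x hx => congrFun hgφ ⟨x, hx⟩⟩

section Transport

variable {X Y : Type*} [MeasurableSpace X] [MeasurableSpace Y] {μ : Measure X}
  {P Q : Set X} {J : Set Y} {φ ψ : X → Y} {g : Y → X}

lemma map_restrict_inter_preimage (hφ : Measurable φ) (hJ : MeasurableSet J) :
    (μ.restrict (P ∩ φ ⁻¹' J)).map φ = ((μ.restrict P).map φ).restrict J := by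
  rw [Measure.restrict_map hφ hJ, Measure.restrict_restrict (hφ hJ), inter_comm]

lemma map_restrict_compl_image (hφ : Measurable φ) (hP : MeasurableSet (φ '' P)) :
    (μ.restrict P).map φ (φ '' P)ᶜ = 0 := by
  rw [Measure.map_apply hφ hP.compl, Measure.restrict_apply (hφ hP.compl)]
  convert measure_empty (μ := μ)
  exact eq_empty_of_forall_notMem fun x hx => hx.1 (mem_image_of_mem φ hx.2)

lemma map_restrict_inter_preimage_comp (hφ : Measurable φ) (hψ : Measurable ψ)
    (hg : Measurable g) (hQ : MeasurableSet Q) (hJ : MeasurableSet J)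
    (hmap : (μ.restrict P).map φ = (μ.restrict Q).map ψ) (hgψ : LeftInvOn g ψ Q) :
    (μ.restrict (P ∩ φ ⁻¹' J)).map (g ∘ φ) = μ.restrict (Q ∩ ψ ⁻¹' J) := by
  rw [← Measure.map_map hg hφ, map_restrict_inter_preimage hφ hJ, hmap,
    ← map_restrict_inter_preimage hψ hJ, Measure.map_map hg hψ]
  conv_rhs => rw [← Measure.map_id (μ := μ.restrict (Q ∩ ψ ⁻¹' J))]
  exact Measure.map_congr (ae_restrict_of_forall_mem (hQ.inter (hψ hJ)) fun x hx => hgψ hx.1)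

omit [MeasurableSpace X] [MeasurableSpace Y] in
lemma comp_mem_inter_preimage (hJ : J ⊆ ψ '' Q) (hgψ : LeftInvOn g ψ Q) {x : X}
    (hx : x ∈ P ∩ φ ⁻¹' J) : g (φ x) ∈ Q ∩ ψ ⁻¹' J ∧ ψ (g (φ x)) = φ x := by
  obtain ⟨y, hy, hyx⟩ := hJ hx.2
  rw [← hyx, hgψ hy]
  exact ⟨⟨hy, show ψ y ∈ J from hyx ▸ hx.2⟩, rfl⟩

theorem exists_invOn_map_restrict_eq [StandardBorelSpace X] [Nonempty X]
    [MeasurableSpace.CountablySeparated Y] (hP : MeasurableSet P) (hQ : MeasurableSet Q)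
    (hφ : Measurable φ) (hψ : Measurable ψ) (hφP : InjOn φ P) (hψQ : InjOn ψ Q)
    (hmap : (μ.restrict P).map φ = (μ.restrict Q).map ψ) :
    ∃ P' ⊆ P, ∃ Q' ⊆ Q, MeasurableSet P' ∧ MeasurableSet Q' ∧ μ (P \ P') = 0 ∧
      ∃ f g : X → X, Measurable f ∧ Measurable g ∧ MapsTo f P' Q' ∧ MapsTo g Q' P' ∧
        InvOn g f P' Q' ∧ (μ.restrict P').map f = μ.restrict Q' ∧
        (μ.restrict Q').map g = μ.restrict P' := by
  obtain ⟨gP, hgP, hgφ⟩ := exists_measurable_leftInvOn hφ hP hφP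
  obtain ⟨gQ, hgQ, hgψ⟩ := exists_measurable_leftInvOn hψ hQ hψQ
  have himP := hP.image_of_measurable_injOn hφ hφP
  have himQ := hQ.image_of_measurable_injOn hψ hψQ
  set J := φ '' P ∩ ψ '' Q
  have hJ : MeasurableSet J := himP.inter himQ
  have hPJ : μ (P \ (P ∩ φ ⁻¹' J)) = 0 := by
    rw [sdiff_self_inter, Set.sdiff_eq, ← preimage_compl, inter_comm,
      ← Measure.restrict_apply (hφ hJ.compl), ← Measure.map_apply hφ hJ.compl, compl_inter]
    refine measure_union_null (map_restrict_compl_image hφ himP) ?_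
    rw [hmap]
    exact map_restrict_compl_image hψ himQ
  have hfx {x} (hx : x ∈ P ∩ φ ⁻¹' J) := comp_mem_inter_preimage inter_subset_right hgψ hx
  have hgy {y} (hy : y ∈ Q ∩ ψ ⁻¹' J) :=
    comp_mem_inter_preimage (J := J) inter_subset_left hgφ hy
  refine ⟨P ∩ φ ⁻¹' J, inter_subset_left, Q ∩ ψ ⁻¹' J, inter_subset_left, hP.inter (hφ hJ),
    hQ.inter (hψ hJ), hPJ, gQ ∘ φ, gP ∘ ψ, hgQ.comp hφ, hgP.comp hψ, fun x hx => (hfx hx).1,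
    fun y hy => (hgy hy).1, ⟨fun x hx => ?_, fun y hy => ?_⟩,
    map_restrict_inter_preimage_comp hφ hψ hgQ hQ hJ hmap hgψ,
    map_restrict_inter_preimage_comp hψ hφ hgP hP hJ hmap.symm hgφ⟩
  · simp only [comp_apply, (hfx hx).2, hgφ hx.1]
  · simp only [comp_apply, (hgy hy).2, hgψ hy.1]

end Transport

open Classical in
noncomputable def exchange {X : Type*} (P Q : Set X) (f g : X → X) : X → X :=
  P.piecewise f (Q.piecewise g id)

section Exchange

open Classical

variable {X : Type*} {P Q : Set X} {f g : X → X} {x : X}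

lemma exchange_of_mem_left (hx : x ∈ P) : exchange P Q f g x = f x :=
  piecewise_eq_of_mem _ _ _ hx

lemma exchange_of_mem_right (hPQ : Disjoint P Q) (hx : x ∈ Q) : exchange P Q f g x = g x := by
  rw [exchange, piecewise_eq_of_notMem _ _ _ (disjoint_right.1 hPQ hx),
    piecewise_eq_of_mem _ _ _ hx]

lemma exchange_of_notMem (hxP : x ∉ P) (hxQ : x ∉ Q) : exchange P Q f g x = x := by
  rw [exchange, piecewise_eq_of_notMem _ _ _ hxP, piecewise_eq_of_notMem _ _ _ hxQ, id]

lemma involutive_exchange (hPQ : Disjoint P Q) (hf : MapsTo f P Q) (hg : MapsTo g Q P)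
    (hgf : InvOn g f P Q) : Involutive (exchange P Q f g) := by
  intro x
  by_cases hxP : x ∈ P
  · rw [exchange_of_mem_left hxP, exchange_of_mem_right hPQ (hf hxP), hgf.1 hxP]
  by_cases hxQ : x ∈ Q
  · rw [exchange_of_mem_right hPQ hxQ, exchange_of_mem_left (hg hxQ), hgf.2 hxQ]
  · rw [exchange_of_notMem hxP hxQ, exchange_of_notMem hxP hxQ]

variable [MeasurableSpace X] {μ : Measure X}

lemma measurable_exchange (hP : MeasurableSet P) (hQ : MeasurableSet Q) (hf : Measurable f)
    (hg : Measurable g) : Measurable (exchange P Q f g) :=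
  hf.piecewise hP (hg.piecewise hQ measurable_id)

lemma measurePreserving_exchange (hPQ : Disjoint P Q) (hP : MeasurableSet P)
    (hQ : MeasurableSet Q) (hf : Measurable f) (hg : Measurable g)
    (hfμ : (μ.restrict P).map f = μ.restrict Q) (hgμ : (μ.restrict Q).map g = μ.restrict P) :
    MeasurePreserving (exchange P Q f g) μ μ := by
  have hW := measurable_exchange hP hQ hf hg
  refine ⟨hW, ?_⟩
  have hPQ' := hP.union hQ
  conv_lhs =>
    rw [← Measure.restrict_add_restrict_compl (μ := μ) hPQ', Measure.restrict_union hPQ hQ]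
  rw [Measure.map_add _ _ hW, Measure.map_add _ _ hW,
    Measure.map_congr (g := f) (ae_restrict_of_forall_mem hP fun x hx => exchange_of_mem_left hx),
    Measure.map_congr (g := g)
      (ae_restrict_of_forall_mem hQ fun x hx => exchange_of_mem_right hPQ hx),
    Measure.map_congr (f := exchange P Q f g) (g := id)
      (ae_restrict_of_forall_mem hPQ'.compl fun x hx =>
        exchange_of_notMem (fun h => hx (Or.inl h)) fun h => hx (Or.inr h)),
    Measure.map_id, hfμ, hgμ, add_comm (μ.restrict Q), ← Measure.restrict_union hPQ hQ,
    Measure.restrict_add_restrict_compl hPQ']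

end Exchange

lemma MeasureTheory.MeasurePreserving.measure_image_equiv {X Y : Type*} [MeasurableSpace X]
    [MeasurableSpace Y] {μ : Measure X} {ν : Measure Y} {e : X ≃ᵐ Y}
    (he : MeasurePreserving e μ ν) (s : Set X) : ν (e '' s) = μ s := by
  rw [e.image_eq_preimage_symm, he.symm.measure_preimage_equiv]

section Decomposition

variable {X : Type*} [MeasurableSpace X] {μ : Measure X}

theorem exists_involutive_measurePreserving_swap [StandardBorelSpace X] [Nonempty X]
    [IsFiniteMeasure μ] [NullSingletonClass μ] {P Q : Set X} (hP : MeasurableSet P)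
    (hQ : MeasurableSet Q) (hPQ : Disjoint P Q) (hμ : μ P = μ Q) :
    ∃ W : X ≃ᵐ X, MeasurePreserving W μ μ ∧ Involutive W ∧ (∀ x, x ∉ P → x ∉ Q → W x = x) ∧
      μ (W '' P \ Q) = 0 := by
  obtain ⟨φ, hφ, P₁, hP₁P, hP₁, hPP₁, hφP₁, hφμ⟩ := exists_injOn_map_restrict_eq_volume (μ := μ) hP
  obtain ⟨ψ, hψ, Q₁, hQ₁Q, hQ₁, -, hψQ₁, hψμ⟩ := exists_injOn_map_restrict_eq_volume (μ := μ) hQ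
  have hmap : (μ.restrict P₁).map φ = (μ.restrict Q₁).map ψ := by
    rw [hφμ, hψμ, measureReal_def, measureReal_def, hμ]
  obtain ⟨P', hP'P₁, Q', hQ'Q₁, hP', hQ', hP₁P', f, g, hf, hg, hfQ', hgP', hinv, hfμ, hgμ⟩ :=
    exists_invOn_map_restrict_eq hP₁ hQ₁ hφ hψ hφP₁ hψQ₁ hmap
  have hP'P := hP'P₁.trans hP₁P
  have hPQ' : Disjoint P' Q' := hPQ.mono hP'P (hQ'Q₁.trans hQ₁Q)
  have hW := involutive_exchange hPQ' hfQ' hgP' hinv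
  have hWμ := measurePreserving_exchange hPQ' hP' hQ' hf hg hfμ hgμ
  refine ⟨.ofInvolutive _ hW hWμ.measurable, hWμ, hW, fun x hxP hxQ =>
    exchange_of_notMem (fun h => hxP (hP'P h)) fun h => hxQ (hQ'Q₁.trans hQ₁Q h), ?_⟩
  have hsub : exchange P' Q' f g '' P \ Q ⊆ exchange P' Q' f g '' (P \ P') := by
    rintro _ ⟨⟨x, hx, rfl⟩, hWx⟩
    refine ⟨x, ⟨hx, fun hx' => hWx ?_⟩, rfl⟩
    rw [exchange_of_mem_left hx']
    exact hQ'Q₁.trans hQ₁Q (hfQ' hx')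
  refine measure_mono_null hsub ?_
  rw [hW.image_eq_preimage_symm]
  refine hWμ.preimage_null (measure_mono_null (fun x hx => ?_) (measure_union_null hPP₁ hP₁P'))
  by_cases hx₁ : x ∈ P₁
  exacts [Or.inr ⟨hx₁, hx.2⟩, Or.inl ⟨hx.1, hx₁⟩]

theorem exists_involutive_measurePreserving_image_diff_null [StandardBorelSpace X] [Nonempty X]
    [IsFiniteMeasure μ] [NullSingletonClass μ] {A B E : Set X} (hA : MeasurableSet A)
    (hB : MeasurableSet B) (hE : MeasurableSet E) (hAB : A ⊆ B) (hEA : μ (E \ A) ≤ μ (B \ A)) :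
    ∃ W : X ≃ᵐ X, MeasurePreserving W μ μ ∧ Involutive W ∧ (∀ x ∈ A, W x = x) ∧
      μ (W '' E \ B) = 0 := by
  -- move the part `E \ B` of `E` into the part of `B \ A` that `E` does not cover
  set P := E \ B
  set D := (B \ A) \ E
  have hPD : μ P ≤ μ D := by
    have hEA' : μ (E \ A) = μ ((B \ A) ∩ E) + μ P := by
      rw [← measure_inter_add_sdiff (E \ A) hB]
      have := @hAB
      congr 2 <;> ext x <;> simp only [mem_inter_iff, Set.mem_sdiff, P] <;> grind
    rw [hEA', ← measure_inter_add_sdiff (B \ A) hE] at hEA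
    exact (ENNReal.add_le_add_iff_left (measure_ne_top μ _)).1 hEA
  obtain ⟨Q, hQD, hQ, hQμ⟩ := exists_subset_measure_eq ((hB.diff hA).diff hE) hPD
  have hPQ : Disjoint P Q := disjoint_left.2 fun x hxP hxQ => hxP.2 (hQD hxQ).1.1
  obtain ⟨W, hWμ, hW, hWfix, hWPQ⟩ :=
    exists_involutive_measurePreserving_swap (hE.diff hB) hQ hPQ hQμ.symm
  refine ⟨W, hWμ, hW, fun x hx => hWfix x (fun h => h.2 (hAB hx)) fun h => (hQD h).1.2 hx,
    measure_mono_null ?_ hWPQ⟩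
  rintro _ ⟨⟨x, hxE, rfl⟩, hWx⟩
  have hxP : x ∈ P :=
    ⟨hxE, fun hxB => hWx (by rwa [hWfix x (fun h => h.2 hxB) fun h => (hQD h).2 hxE])⟩
  exact ⟨mem_image_of_mem W hxP, fun h => hWx (hQD h).1.1⟩

theorem measure_image_diff_le_of_ae_eq_comp {T U V : X ≃ᵐ X} {A B : Set X}
    (hT : Measure.QuasiMeasurePreserving T.symm μ μ) (hU : MeasurePreserving U μ μ)
    (hUA : μ ({x | U x ≠ x} ∩ A) = 0) (hVA : μ (V '' A \ B) = 0)
    (hTUV : ⇑T =ᵐ[μ] fun x => U (V x)) : μ (T '' A \ A) ≤ μ (B \ A) := by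
  set N := {x | T x ≠ U (V x)}
  have hsub : T '' A \ A ⊆ T '' N ∪ U '' ((V '' A \ B) ∪ ({x | U x ≠ x} ∩ A) ∪ (B \ A)) := by
    rintro _ ⟨⟨x, hxA, rfl⟩, hTx⟩
    by_cases hxN : x ∈ N
    · exact Or.inl (mem_image_of_mem T hxN)
    have hTUVx : T x = U (V x) := not_not.1 hxN
    refine Or.inr ⟨V x, ?_, hTUVx.symm⟩
    by_cases hVB : V x ∈ B
    · by_cases hVA : V x ∈ A
      · exact Or.inl (Or.inr ⟨fun h => hTx (by rwa [hTUVx, h]), hVA⟩)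
      · exact Or.inr ⟨hVB, hVA⟩
    · exact Or.inl (Or.inl ⟨mem_image_of_mem V hxA, hVB⟩)
  calc μ (T '' A \ A)
      ≤ μ (T '' N) + μ (U '' ((V '' A \ B) ∪ ({x | U x ≠ x} ∩ A) ∪ (B \ A))) :=
        (measure_mono hsub).trans (measure_union_le _ _)
    _ = μ ((V '' A \ B) ∪ ({x | U x ≠ x} ∩ A) ∪ (B \ A)) := by
        rw [T.image_eq_preimage_symm, hT.preimage_null (ae_iff.1 hTUV), zero_add,
          hU.measure_image_equiv]
    _ ≤ μ (V '' A \ B) + μ ({x | U x ≠ x} ∩ A) + μ (B \ A) :=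
        (measure_union_le _ _).trans (add_le_add_left (measure_union_le _ _) _)
    _ = μ (B \ A) := by rw [hVA, hUA, zero_add, zero_add]

lemma MeasurableEquiv.quasiMeasurePreserving_symm_of_null_iff {T : X ≃ᵐ X}
    (hT : ∀ s : Set X, MeasurableSet s → (μ (T ⁻¹' s) = 0 ↔ μ s = 0)) :
    Measure.QuasiMeasurePreserving T.symm μ μ :=
  ⟨T.symm.measurable, Measure.AbsolutelyContinuous.mk fun s hs hs0 => by
    rw [Measure.map_apply T.symm.measurable hs]
    exact (hT _ (T.symm.measurable hs)).1 (by rwa [← preimage_comp, T.symm_comp_self, preimage_id])⟩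

end Decomposition

theorem stmt_18_general {X : Type*} [MeasurableSpace X] [StandardBorelSpace X]
    (μ : Measure X) [IsProbabilityMeasure μ] [NullSingletonClass μ] (k : ℕ)
    (A B : Set X) (hA : MeasurableSet A) (hB : MeasurableSet B) (hAB : A ⊆ B)
    (hBA : μ (B \ A) = (2 : ℝ≥0∞)⁻¹ ^ k)
    (T : X ≃ᵐ X) (hT : ∀ s : Set X, MeasurableSet s → (μ (T ⁻¹' s) = 0 ↔ μ s = 0)) :
    μ (T '' A \ A) ≤ (2 : ℝ≥0∞)⁻¹ ^ k ↔
      ∃ U V : X ≃ᵐ X,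
        MeasurePreserving U μ μ ∧ μ ({x | U x ≠ x} ∩ A) = 0 ∧
        (∀ s : Set X, MeasurableSet s → (μ (V ⁻¹' s) = 0 ↔ μ s = 0)) ∧
        μ (V '' A \ B) = 0 ∧
        (⇑T : X → X) =ᵐ[μ] (fun x => U (V x)) := by
  have := nonempty_of_isProbabilityMeasure μ
  rw [← hBA]
  constructor
  · intro hle
    obtain ⟨W, hWμ, hW, hWA, hWB⟩ := exists_involutive_measurePreserving_image_diff_null hA hB
      (T.measurableEmbedding.measurableSet_image.2 hA) hAB hle
    refine ⟨W, T.trans W, hWμ, ?_, fun s hs => ?_, ?_, ae_of_all _ fun x => (hW (T x)).symm⟩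
    · rw [show {x | W x ≠ x} ∩ A = ∅ from eq_empty_of_forall_notMem fun x hx => hx.1 (hWA x hx.2),
        measure_empty]
    · rw [MeasurableEquiv.coe_trans, preimage_comp, hT _ (hWμ.measurable hs),
        hWμ.measure_preimage hs.nullMeasurableSet]
    · rwa [MeasurableEquiv.coe_trans, image_comp]
  · rintro ⟨U, V, hUμ, hUA, -, hVB, hTUV⟩
    exact measure_image_diff_le_of_ae_eq_comp (T.quasiMeasurePreserving_symm_of_null_iff hT)
      hUμ hUA hVB hTUV

/-- In `Aut*(X,μ)` of a standard probability space: for a Borel set `A` with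
`μ(A) < 1 - 2⁻ᵏ` and `B ⊇ A` with `μ(B ∖ A) = 2⁻ᵏ`, one has
`{T : μ(T(A) ∖ A) ≤ 2⁻ᵏ} = H_{X∖A} · G(A,B)`: a non-singular `T` satisfies
`μ(T(A) ∖ A) ≤ 2⁻ᵏ` iff `T = U ∘ V` (mod null) with `U` measure-preserving
supported in `X ∖ A` and `V` non-singular with `V(A) ⊆ B` mod null. -/
theorem stmt_18 {X : Type*} [MeasurableSpace X] [StandardBorelSpace X]
    (μ : Measure X) [IsProbabilityMeasure μ] [NullSingletonClass μ] (k : ℕ)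
    (A B : Set X) (hA : MeasurableSet A) (hB : MeasurableSet B) (hAB : A ⊆ B)
    (hAsmall : μ A + (2 : ℝ≥0∞)⁻¹ ^ k < 1)
    (hBA : μ (B \ A) = (2 : ℝ≥0∞)⁻¹ ^ k)
    (T : X ≃ᵐ X) (hT : ∀ s : Set X, MeasurableSet s → (μ (T ⁻¹' s) = 0 ↔ μ s = 0)) :
    μ (T '' A \ A) ≤ (2 : ℝ≥0∞)⁻¹ ^ k ↔
      ∃ U V : X ≃ᵐ X,
        MeasurePreserving U μ μ ∧ μ ({x | U x ≠ x} ∩ A) = 0 ∧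
        (∀ s : Set X, MeasurableSet s → (μ (V ⁻¹' s) = 0 ↔ μ s = 0)) ∧
        μ (V '' A \ B) = 0 ∧
        (⇑T : X → X) =ᵐ[μ] (fun x => U (V x)) :=
  stmt_18_general μ k A B hA hB hAB hBA T hT
end
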